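/- arXiv:1706.05550 — 2 statements merged into one kernel-verified Lean document; each statement's English description precedes it below -/
import Mathlib

section
/- Let 𝒫 be the Petersen graph. Then κ(𝒫) = 6, and for every real number k with 1 ≤ k ≤ 6, dim_f^k(𝒫) = 5k/3. -/
open Finset

namespace FracDim

variable {V : Type*}

/-- `R{x,y}`: the set of vertices `z` with `d(x,z) ≠ d(y,z)`. -/
noncomputable def resSet [Fintype V] (G : SimpleGraph V) (x y : V) : Finset V :=
  Finset.univ.filter (fun z => G.dist x z ≠ G.dist y z)

/-- `κ(G) = min { |R{x,y}| : x ≠ y }`. -/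
noncomputable def kappa [Fintype V] (G : SimpleGraph V) : ℕ :=
  sInf {n : ℕ | ∃ x y : V, x ≠ y ∧ (resSet G x y).card = n}

/-- A `k`-resolving function: `g : V → [0,1]` with `g(R{x,y}) ≥ k` for all distinct `x, y`. -/
def IsKResolving [Fintype V] (G : SimpleGraph V) (k : ℝ) (g : V → ℝ) : Prop :=
  (∀ v, 0 ≤ g v ∧ g v ≤ 1) ∧
    ∀ x y : V, x ≠ y → k ≤ ∑ z ∈ resSet G x y, g z

/-- The fractional `k`-metric dimension of `G`. -/
noncomputable def fracKDim [Fintype V] (G : SimpleGraph V) (k : ℝ) : ℝ :=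
  sInf {s : ℝ | ∃ g : V → ℝ, IsKResolving G k g ∧ s = ∑ v, g v}

/-- The fractional metric dimension of `G`. -/
noncomputable def fracDim [Fintype V] (G : SimpleGraph V) : ℝ :=
  fracKDim G 1

end FracDim

namespace FracDim

/-- The Petersen graph: vertices are the 2-element subsets of a 5-element set, two
vertices being adjacent when the corresponding subsets are disjoint. -/
def petersenGraph : SimpleGraph {s : Finset (Fin 5) // s.card = 2} :=
  SimpleGraph.fromRel (fun a b => Disjoint a.1 b.1)

end FracDim

/-!
Double counting over the ordered pairs of distinct vertices: if every resolving set `R{x,y}` has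
`c` elements and every vertex lies in the same number `m` of them, then summing the constraints
of a `k`-resolving function `g` gives `n(n-1) k ≤ m ∑ g`, while counting incidences gives
`n(n-1) c = n m`; hence `∑ g ≥ n k / c`, and the constant function `k / c` attains this.
In the Petersen graph `d(x,z)` is `0`, `1` or `2` according as `z = x`, `z ∩ x = ∅` or
otherwise, so `|R{x,y}| = 6` for all `x ≠ y`, and every vertex lies in `54` of the `90`
resolving sets; thus `κ = 6` and `dim_f^k = 10 k / 6`.
-/

namespace FracDim

section General

variable {V : Type*} [Fintype V] (G : SimpleGraph V)

lemma fracKDim_le {k : ℝ} {g : V → ℝ} (hg : IsKResolving G k g) :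
    fracKDim G k ≤ ∑ v, g v :=
  csInf_le ⟨0, by rintro _ ⟨f, hf, rfl⟩; exact sum_nonneg fun v _ => (hf.1 v).1⟩ ⟨g, hg, rfl⟩

lemma le_fracKDim {k b : ℝ} (hne : ∃ g, IsKResolving G k g)
    (h : ∀ g, IsKResolving G k g → b ≤ ∑ v, g v) : b ≤ fracKDim G k := by
  obtain ⟨g, hg⟩ := hne
  exact le_csInf ⟨_, g, hg, rfl⟩ (by rintro _ ⟨f, hf, rfl⟩; exact h f hf)

lemma kappa_eq_of_card_resSet_eq [Nontrivial V] {c : ℕ}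
    (hR : ∀ x y, x ≠ y → #(resSet G x y) = c) : kappa G = c := by
  obtain ⟨x, y, hxy⟩ := exists_pair_ne V
  have hset : {n | ∃ x y : V, x ≠ y ∧ #(resSet G x y) = n} = {c} :=
    Set.eq_singleton_iff_unique_mem.2
      ⟨⟨x, y, hxy, hR x y hxy⟩, by rintro _ ⟨x, y, h, rfl⟩; exact hR x y h⟩
  rw [kappa, hset, csInf_singleton]

lemma isKResolving_const {c : ℕ} {k : ℝ} (hc : 0 < c)
    (hR : ∀ x y, x ≠ y → c ≤ #(resSet G x y)) (hk0 : 0 ≤ k) (hkc : k ≤ c) :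
    IsKResolving G k (fun _ => k / c) := by
  have hc' : (0 : ℝ) < c := by exact_mod_cast hc
  refine ⟨fun _ => ⟨by positivity, (div_le_one hc').2 hkc⟩, fun x y hxy => ?_⟩
  calc k = c * (k / c) := by field_simp
    _ ≤ #(resSet G x y) * (k / c) := by gcongr; exact_mod_cast hR x y hxy
    _ = ∑ _ ∈ resSet G x y, k / c := by rw [sum_const, nsmul_eq_mul]

variable [DecidableEq V]

lemma card_offDiag_mul_le_mul_sum {k : ℝ} {g : V → ℝ} {m : ℕ} (hg : IsKResolving G k g)
    (hm : ∀ z, #{p ∈ (univ : Finset V).offDiag | z ∈ resSet G p.1 p.2} = m) :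
    #(univ : Finset V).offDiag * k ≤ m * ∑ v, g v :=
  calc #(univ : Finset V).offDiag * k = ∑ _p ∈ (univ : Finset V).offDiag, k := by
        rw [sum_const, nsmul_eq_mul]
    _ ≤ ∑ p ∈ (univ : Finset V).offDiag, ∑ z ∈ resSet G p.1 p.2, g z :=
        sum_le_sum fun p hp => hg.2 _ _ (mem_offDiag.1 hp).2.2
    _ = ∑ z, ∑ _p ∈ {p ∈ (univ : Finset V).offDiag | z ∈ resSet G p.1 p.2}, g z :=
        sum_comm' fun p z => by simp only [mem_filter, mem_univ, and_true]
    _ = m * ∑ v, g v := by simp only [sum_const, hm, nsmul_eq_mul, mul_sum]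

lemma card_offDiag_mul_eq {c m : ℕ} (hR : ∀ x y, x ≠ y → #(resSet G x y) = c)
    (hm : ∀ z, #{p ∈ (univ : Finset V).offDiag | z ∈ resSet G p.1 p.2} = m) :
    #(univ : Finset V).offDiag * c = #(univ : Finset V) * m := by
  apply card_mul_eq_card_mul (fun p z => z ∈ resSet G p.1 p.2)
  · intro p hp
    rw [bipartiteAbove, filter_mem_eq_inter, univ_inter]
    exact hR _ _ (mem_offDiag.1 hp).2.2
  · exact fun z _ => hm z

theorem fracKDim_eq_of_card_resSet_eq [Nontrivial V] {c m : ℕ} {k : ℝ} (hc : 0 < c)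
    (hR : ∀ x y, x ≠ y → #(resSet G x y) = c)
    (hm : ∀ z, #{p ∈ (univ : Finset V).offDiag | z ∈ resSet G p.1 p.2} = m)
    (hk0 : 0 ≤ k) (hkc : k ≤ c) :
    fracKDim G k = Fintype.card V * k / c := by
  have hc' : (0 : ℝ) < c := by exact_mod_cast hc
  have hconst := isKResolving_const G hc (fun x y h => (hR x y h).ge) hk0 hkc
  have hcount : (#(univ : Finset V).offDiag : ℝ) * c = Fintype.card V * m := by
    exact_mod_cast card_univ (α := V) ▸ card_offDiag_mul_eq G hR hm
  have hN : (0 : ℝ) < #(univ : Finset V).offDiag := by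
    obtain ⟨x, y, hxy⟩ := exists_pair_ne V
    exact_mod_cast card_pos.2 ⟨(x, y), by simpa using hxy⟩
  have hm' : (0 : ℝ) < m := by
    have : (0 : ℝ) < Fintype.card V * m := hcount ▸ by positivity
    exact pos_of_mul_pos_right this (by positivity)
  refine le_antisymm ?_ (le_fracKDim G ⟨_, hconst⟩ fun g hg => ?_)
  · calc fracKDim G k ≤ ∑ _v : V, k / c := fracKDim_le G hconst
      _ = Fintype.card V * k / c := by rw [sum_const, card_univ, nsmul_eq_mul, mul_div_assoc]
  · have hlow := card_offDiag_mul_le_mul_sum G hg hm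
    rw [div_le_iff₀ hc']
    refine le_of_mul_le_mul_left ?_ hm'
    nlinarith

end General

section Petersen

lemma petersenGraph_adj {x y : {s : Finset (Fin 5) // s.card = 2}} :
    petersenGraph.Adj x y ↔ Disjoint x.1 y.1 := by
  simp only [petersenGraph, SimpleGraph.fromRel_adj, disjoint_comm (a := y.1), or_self]
  refine ⟨And.right, fun h => ⟨?_, h⟩⟩
  rintro rfl
  simpa [x.2] using congrArg card (disjoint_self.1 h)

lemma exists_disjoint_disjoint_petersen : ∀ x z : {s : Finset (Fin 5) // s.card = 2},
    x ≠ z → ¬ Disjoint x.1 z.1 → ∃ w : {s : Finset (Fin 5) // s.card = 2},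
      Disjoint x.1 w.1 ∧ Disjoint w.1 z.1 := by
  decide

lemma petersenGraph_dist (x z : {s : Finset (Fin 5) // s.card = 2}) :
    petersenGraph.dist x z = if x = z then 0 else if Disjoint x.1 z.1 then 1 else 2 := by
  split_ifs with hxz hdisj
  · simp [hxz]
  · exact SimpleGraph.dist_eq_one_iff_adj.2 (petersenGraph_adj.2 hdisj)
  · obtain ⟨w, hxw, hwz⟩ := exists_disjoint_disjoint_petersen x z hxz hdisj
    have h2 : petersenGraph.edist x z = 2 := SimpleGraph.edist_eq_two_iff.2
      ⟨hxz, by rwa [petersenGraph_adj],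
        ⟨w, by simp [SimpleGraph.mem_commonNeighbors, petersenGraph_adj, hxw, hwz.symm]⟩⟩
    simp [SimpleGraph.dist, h2]

lemma resSet_petersenGraph (x y : {s : Finset (Fin 5) // s.card = 2}) :
    resSet petersenGraph x y = univ.filter fun z =>
      (if x = z then 0 else if Disjoint x.1 z.1 then 1 else 2) ≠
        (if y = z then 0 else if Disjoint y.1 z.1 then 1 else 2) := by
  simp only [resSet, petersenGraph_dist]

lemma card_resSet_petersenGraph (x y : {s : Finset (Fin 5) // s.card = 2}) (hxy : x ≠ y) :
    #(resSet petersenGraph x y) = 6 := by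
  rw [resSet_petersenGraph]
  revert x y
  decide

lemma card_filter_mem_resSet_petersenGraph (z : {s : Finset (Fin 5) // s.card = 2}) :
    #{p ∈ univ.offDiag | z ∈ resSet petersenGraph p.1 p.2} = 54 := by
  simp only [resSet_petersenGraph, mem_filter, mem_univ, true_and]
  revert z
  decide

end Petersen

end FracDim

open FracDim in
/-- For the Petersen graph `𝒫`: `κ(𝒫) = 6`, and for every real `k` with `1 ≤ k ≤ 6`,
`dim_f^k(𝒫) = 5k/3`. -/
theorem fracKDim_petersen :
    kappa petersenGraph = 6 ∧
      ∀ k : ℝ, 1 ≤ k → k ≤ 6 → fracKDim petersenGraph k = 5 * k / 3 := by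
  have : Nontrivial {s : Finset (Fin 5) // s.card = 2} :=
    Fintype.one_lt_card_iff_nontrivial.1 (by decide)
  refine ⟨kappa_eq_of_card_resSet_eq _ card_resSet_petersenGraph, fun k hk1 hk6 => ?_⟩
  rw [fracKDim_eq_of_card_resSet_eq _ (by norm_num) card_resSet_petersenGraph
    card_filter_mem_resSet_petersenGraph (by linarith) (by exact_mod_cast hk6)]
  rw [show Fintype.card {s : Finset (Fin 5) // s.card = 2} = 10 by decide]
  ring
end

section
/- Let B_m (m ≥ 2) be a bouquet of m cycles C^1, C^2, …, C^m with a cut-vertex, i.e., the vertex sum of the m cycles at one common vertex, where C^1 has minimum length among the m cycles. Then κ(B_m) = |V(C^1)| − 1 if C^1 is an odd cycle and κ(B_m) = |V(C^1)| − 2 if C^1 is an even cycle, and for every real number k with 1 ≤ k ≤ κ(B_m), dim_f^k(B_m) = k·m. -/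
/-!
Distances in the bouquet are explicit: inside one cycle they are cycle distances, and between
two cycles they pass through the hub. For the two neighbours of the hub on a cycle, `R{x,y}` is
that cycle minus the antipode of the hub (the *core* of the cycle). Hence `κ` is at most the
size of the smallest core, and a `k`-resolving function has mass at least `k` on every cycle,
so at least `k·m` in total. Conversely, spreading mass `k` uniformly over every core is
`k`-resolving, because each `R{x,y}` contains a whole core or at least half of the cores of two
different cycles. For `k` the size of the smallest core this function is bounded by `1`, which
bounds `κ` from below.
-/

open Finset

namespace FracDim

/-- The bouquet of `m` cycles: cycle `i` has length `r i + 1` (`r i ≥ 2`), consisting of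
the common cut-vertex (`none`) together with the path `(i,0), (i,1), …, (i, r i − 1)`;
the hub is adjacent to the two endpoints `(i,0)` and `(i, r i − 1)` of each path. -/
def bouquet (m : ℕ) (r : Fin m → ℕ) : SimpleGraph (Option (Σ i : Fin m, Fin (r i))) :=
  SimpleGraph.fromRel (fun a b =>
    (∃ (i : Fin m) (j : Fin (r i)), a = none ∧ b = some ⟨i, j⟩ ∧
        (j.val = 0 ∨ j.val = r i - 1)) ∨
      (∃ (i : Fin m) (j j' : Fin (r i)), a = some ⟨i, j⟩ ∧ b = some ⟨i, j'⟩ ∧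
        j.val + 1 = j'.val))

end FracDim

namespace FracDim

open Finset SimpleGraph

section Walks

variable {V : Type*} {G : SimpleGraph V}

lemma le_add_length_of_adj_le {f : V → ℕ} (hf : ∀ ⦃a b⦄, G.Adj a b → f b ≤ f a + 1) {x y : V}
    (w : G.Walk x y) : f y ≤ f x + w.length := by
  induction w with
  | nil => simp
  | cons hadj _ ih => grind [hf hadj, Walk.length_cons]

lemma le_add_dist_of_adj_le {f : V → ℕ} (hf : ∀ ⦃a b⦄, G.Adj a b → f b ≤ f a + 1) {x y : V}
    (h : G.Reachable x y) : f y ≤ f x + G.dist x y := by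
  obtain ⟨w, hw⟩ := h.exists_walk_length_eq_dist
  exact hw ▸ le_add_length_of_adj_le hf w

lemma dist_le_dist_add_one_of_adj {v w : V} (h : G.Adj v w) (u : V) :
    G.dist u w ≤ G.dist u v + 1 := by
  simpa [dist_eq_one_iff_adj.2 h] using h.reachable.dist_triangle_right u

end Walks

section Resolving

variable {V : Type*} [Fintype V] {G : SimpleGraph V}

lemma resSet_comm (G : SimpleGraph V) (x y : V) : resSet G x y = resSet G y x := by
  ext z
  simp only [resSet, mem_filter, mem_univ, true_and, ne_comm]

lemma kappa_le_card_resSet {x y : V} (hxy : x ≠ y) : kappa G ≤ #(resSet G x y) :=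
  Nat.sInf_le ⟨x, y, hxy, rfl⟩

lemma IsKResolving.le_card_resSet {k : ℝ} {g : V → ℝ} (hg : IsKResolving G k g) {x y : V}
    (hxy : x ≠ y) : k ≤ #(resSet G x y) := by
  calc k ≤ ∑ z ∈ resSet G x y, g z := hg.2 x y hxy
    _ ≤ ∑ _z ∈ resSet G x y, (1 : ℝ) := sum_le_sum fun z _ => (hg.1 z).2
    _ = #(resSet G x y) := by simp

lemma IsKResolving.le_kappa {k : ℝ} {g : V → ℝ} (hg : IsKResolving G k g) {x y : V}
    (hxy : x ≠ y) : k ≤ kappa G := by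
  obtain ⟨x', y', hxy', hcard⟩ : kappa G ∈ {n | ∃ x y : V, x ≠ y ∧ #(resSet G x y) = n} :=
    Nat.sInf_mem ⟨_, x, y, hxy, rfl⟩
  rw [← hcard]
  exact hg.le_card_resSet hxy'

lemma fracKDim_eq_of_isKResolving {k : ℝ} {g : V → ℝ} (hg : IsKResolving G k g)
    (hle : ∀ g', IsKResolving G k g' → ∑ v, g v ≤ ∑ v, g' v) :
    fracKDim G k = ∑ v, g v :=
  IsLeast.csInf_eq ⟨⟨g, hg, rfl⟩, by rintro _ ⟨g', hg', rfl⟩; exact hle g' hg'⟩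

end Resolving

section Bouquet

variable {m : ℕ} {r : Fin m → ℕ}

/-- Vertex `(i, j)` sits at position `j + 1` of a cycle of length `r i + 1` whose position `0` is
the hub; `hubDist` and `cycleDist` are the resulting distances along a cycle. -/
def hubDist (r : Fin m → ℕ) (i : Fin m) (j : ℕ) : ℕ := min (j + 1) (r i - j)

def cycleDist (n a b : ℕ) : ℕ := min (a - b + (b - a)) (n - (a - b + (b - a)))

def bouquetDist (r : Fin m → ℕ) :
    Option (Σ i : Fin m, Fin (r i)) → Option (Σ i : Fin m, Fin (r i)) → ℕ
  | none, none => 0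
  | none, some ⟨i, j⟩ | some ⟨i, j⟩, none => hubDist r i j
  | some ⟨i, a⟩, some ⟨i', b⟩ =>
      if i = i' then cycleDist (r i + 1) a b else hubDist r i a + hubDist r i' b

@[simp] lemma bouquetDist_none_none : bouquetDist r none none = 0 := rfl

@[simp] lemma bouquetDist_none_some (i : Fin m) (j : Fin (r i)) :
    bouquetDist r none (some ⟨i, j⟩) = hubDist r i j := rfl

@[simp] lemma bouquetDist_some_none (i : Fin m) (j : Fin (r i)) :
    bouquetDist r (some ⟨i, j⟩) none = hubDist r i j := rfl

@[simp] lemma bouquetDist_same (i : Fin m) (a b : Fin (r i)) :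
    bouquetDist r (some ⟨i, a⟩) (some ⟨i, b⟩) = cycleDist (r i + 1) a b := if_pos rfl

lemma bouquetDist_of_ne {i i' : Fin m} (h : i ≠ i') (a : Fin (r i)) (b : Fin (r i')) :
    bouquetDist r (some ⟨i, a⟩) (some ⟨i', b⟩) = hubDist r i a + hubDist r i' b := if_neg h

lemma bouquetDist_self (x : Option (Σ i : Fin m, Fin (r i))) : bouquetDist r x x = 0 := by
  rcases x with _ | ⟨i, j⟩
  · rfl
  · simp [cycleDist]

lemma bouquetDist_le_of_adj (x : Option (Σ i : Fin m, Fin (r i)))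
    {a b : Option (Σ i : Fin m, Fin (r i))} (h : (bouquet m r).Adj a b) :
    bouquetDist r x b ≤ bouquetDist r x a + 1 := by
  rw [bouquet, fromRel_adj] at h
  obtain ⟨-, (⟨i, j, rfl, rfl, hj⟩ | ⟨i, j, j', rfl, rfl, hj⟩) |
    (⟨i, j, rfl, rfl, hj⟩ | ⟨i, j, j', rfl, rfl, hj⟩)⟩ := h <;>
  rcases x with _ | ⟨i', c⟩ <;>
  first
  | (simp only [bouquetDist_none_none, bouquetDist_none_some, bouquetDist_some_none, hubDist]
     omega)
  | (obtain rfl | hi := eq_or_ne i' i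
     · simp only [bouquetDist_same, bouquetDist_some_none, cycleDist, hubDist]
       omega
     · simp only [bouquetDist_of_ne hi, bouquetDist_some_none, hubDist]
       omega)

lemma bouquet_adj_hub (i : Fin m) (j : Fin (r i)) (h : j.val = 0 ∨ j.val = r i - 1) :
    (bouquet m r).Adj none (some ⟨i, j⟩) := by
  rw [bouquet, fromRel_adj]
  exact ⟨by simp, Or.inl (Or.inl ⟨i, j, rfl, rfl, h⟩)⟩

lemma bouquet_adj_succ (i : Fin m) (j j' : Fin (r i)) (h : j.val + 1 = j'.val) :
    (bouquet m r).Adj (some ⟨i, j⟩) (some ⟨i, j'⟩) := by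
  rw [bouquet, fromRel_adj]
  refine ⟨?_, Or.inl (Or.inr ⟨i, j, j', rfl, rfl, h⟩)⟩
  simp only [ne_eq, Option.some.injEq, Sigma.mk.injEq, heq_eq_eq, true_and]
  omega

lemma bouquet_reachable_hub (i : Fin m) :
    ∀ (n : ℕ) (h : n < r i), (bouquet m r).Reachable none (some ⟨i, ⟨n, h⟩⟩)
  | 0, h => (bouquet_adj_hub i ⟨0, h⟩ (Or.inl rfl)).reachable
  | n + 1, h =>
    (bouquet_reachable_hub i n (by omega)).trans (bouquet_adj_succ i _ _ rfl).reachable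

lemma bouquet_connected : (bouquet m r).Connected :=
  connected_iff_exists_forall_reachable _ |>.2
    ⟨none, fun | none => .rfl | some ⟨i, j⟩ => bouquet_reachable_hub i j j.isLt⟩

lemma bouquet_dist_add_le (i : Fin m) (a : Fin (r i)) :
    ∀ (n : ℕ) (h : a + n < r i), (bouquet m r).dist (some ⟨i, a⟩) (some ⟨i, ⟨a + n, h⟩⟩) ≤ n
  | 0, h => by simp
  | n + 1, h => by
    grw [dist_le_dist_add_one_of_adj (bouquet_adj_succ i ⟨a + n, by omega⟩ _ rfl),
      bouquet_dist_add_le i a n]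

lemma bouquet_dist_le_sub_of_le (i : Fin m) {a b : Fin (r i)} (hab : a ≤ b) :
    (bouquet m r).dist (some ⟨i, a⟩) (some ⟨i, b⟩) ≤ b - a := by
  have := bouquet_dist_add_le i a (b - a) (by omega)
  rwa [show (⟨a + (b - a), _⟩ : Fin (r i)) = b by ext; simp; omega] at this

lemma bouquet_dist_hub_le (i : Fin m) (j : Fin (r i)) :
    (bouquet m r).dist none (some ⟨i, j⟩) ≤ hubDist r i j := by
  have hj := j.isLt
  have hfirst := bouquet_adj_hub (r := r) i ⟨0, by omega⟩ (Or.inl rfl)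
  have hlast := bouquet_adj_hub (r := r) i ⟨r i - 1, by omega⟩ (Or.inr rfl)
  refine le_min ?_ ?_
  · grw [bouquet_connected.dist_triangle, dist_eq_one_iff_adj.2 hfirst,
      bouquet_dist_le_sub_of_le i (show ⟨0, _⟩ ≤ j from Fin.le_def.2 (Nat.zero_le _))]
    simp [add_comm]
  · grw [bouquet_connected.dist_triangle, dist_eq_one_iff_adj.2 hlast, SimpleGraph.dist_comm,
      bouquet_dist_le_sub_of_le i (show j ≤ ⟨r i - 1, _⟩ from Fin.le_def.2 (by simp; omega))]
    omega

lemma bouquet_dist_same_le (i : Fin m) (a b : Fin (r i)) :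
    (bouquet m r).dist (some ⟨i, a⟩) (some ⟨i, b⟩) ≤ cycleDist (r i + 1) a b := by
  wlog hab : a ≤ b generalizing a b
  · rw [SimpleGraph.dist_comm]
    exact (this b a (le_of_not_ge hab)).trans_eq (by simp only [cycleDist]; omega)
  refine le_min ((bouquet_dist_le_sub_of_le i hab).trans (by omega)) ?_
  grw [bouquet_connected.dist_triangle (v := none), SimpleGraph.dist_comm, bouquet_dist_hub_le,
    bouquet_dist_hub_le]
  simp only [hubDist]
  omega

lemma bouquet_dist_le_bouquetDist (x y : Option (Σ i : Fin m, Fin (r i))) :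
    (bouquet m r).dist x y ≤ bouquetDist r x y := by
  rcases x with _ | ⟨i, a⟩ <;> rcases y with _ | ⟨i', b⟩
  · simp
  · exact bouquet_dist_hub_le i' b
  · exact SimpleGraph.dist_comm.trans_le (bouquet_dist_hub_le i a)
  · obtain rfl | hi := eq_or_ne i i'
    · simpa using bouquet_dist_same_le i a b
    · grw [bouquetDist_of_ne hi, bouquet_connected.dist_triangle (v := none), SimpleGraph.dist_comm,
        bouquet_dist_hub_le, bouquet_dist_hub_le]

theorem bouquet_dist (x y : Option (Σ i : Fin m, Fin (r i))) :
    (bouquet m r).dist x y = bouquetDist r x y := by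
  refine le_antisymm (bouquet_dist_le_bouquetDist x y) ?_
  simpa [bouquetDist_self] using
    le_add_dist_of_adj_le (fun _ _ => bouquetDist_le_of_adj x) (bouquet_connected.preconnected x y)

lemma mem_resSet_bouquet {x y z : Option (Σ i : Fin m, Fin (r i))} :
    z ∈ resSet (bouquet m r) x y ↔ bouquetDist r x z ≠ bouquetDist r y z := by
  simp [resSet, bouquet_dist]

/-- The positions of cycle `i` other than the antipode of the hub. -/
def core (r : Fin m → ℕ) (i : Fin m) : Finset (Fin (r i)) := {j | 2 * (j.val + 1) ≠ r i + 1}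

lemma card_core (i : Fin m) : #(core r i) = 2 * (r i / 2) := by
  rcases Nat.even_or_odd (r i) with ⟨c, hc⟩ | ⟨c, hc⟩
  · rw [core, filter_true_of_mem fun j _ => by omega, card_univ, Fintype.card_fin]
    omega
  · have hcore : core r i = univ.erase ⟨c, by omega⟩ := by
      ext j
      simp [core, Fin.ext_iff]
      omega
    rw [hcore, card_erase_of_mem (mem_univ _), card_univ, Fintype.card_fin]
    omega

def coreCount (s : Finset (Option (Σ i : Fin m, Fin (r i)))) (i : Fin m) : ℕ :=
  #{j ∈ core r i | some ⟨i, j⟩ ∈ s}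

lemma mem_resSet_none_of_ne {i i₁ : Fin m} (hi : i₁ ≠ i) (b : Fin (r i)) (j : Fin (r i₁)) :
    some ⟨i₁, j⟩ ∈ resSet (bouquet m r) none (some ⟨i, b⟩) := by
  rw [mem_resSet_bouquet, bouquetDist_none_some, bouquetDist_of_ne (Ne.symm hi)]
  simp only [hubDist]
  omega

lemma mem_resSet_same_of_hubDist_ne {i i₁ : Fin m} (hi : i₁ ≠ i) {a b : Fin (r i)}
    (h : hubDist r i a ≠ hubDist r i b) (j : Fin (r i₁)) :
    some ⟨i₁, j⟩ ∈ resSet (bouquet m r) (some ⟨i, a⟩) (some ⟨i, b⟩) := by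
  rw [mem_resSet_bouquet, bouquetDist_of_ne (Ne.symm hi), bouquetDist_of_ne (Ne.symm hi)]
  omega

lemma mem_resSet_same_of_hubDist_eq {i : Fin m} {a b : Fin (r i)} (hab : a ≠ b)
    (h : hubDist r i a = hubDist r i b) {j : Fin (r i)} (hj : j ∈ core r i) :
    some ⟨i, j⟩ ∈ resSet (bouquet m r) (some ⟨i, a⟩) (some ⟨i, b⟩) := by
  rw [Fin.ne_iff_vne] at hab
  simp only [core, mem_filter, mem_univ, true_and] at hj
  rw [mem_resSet_bouquet, bouquetDist_same, bouquetDist_same]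
  simp only [hubDist, cycleDist] at h ⊢
  omega

lemma mem_resSet_of_hubDist_lt {i i' : Fin m} (hi : i ≠ i') {a : Fin (r i)} {b : Fin (r i')}
    (h : hubDist r i a < hubDist r i' b) (j : Fin (r i)) :
    some ⟨i, j⟩ ∈ resSet (bouquet m r) (some ⟨i, a⟩) (some ⟨i', b⟩) := by
  rw [mem_resSet_bouquet, bouquetDist_same, bouquetDist_of_ne hi.symm]
  simp only [hubDist, cycleDist] at h ⊢
  omega

lemma half_le_coreCount_resSet {i i' : Fin m} (hi : i ≠ i') {a : Fin (r i)} {b : Fin (r i')}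
    (h : hubDist r i a = hubDist r i' b) :
    r i / 2 ≤ coreCount (resSet (bouquet m r) (some ⟨i, a⟩) (some ⟨i', b⟩)) i := by
  -- the `r i / 2` positions of cycle `i` on the same side of the antipode as `a` are closer
  -- to `(i, a)` than to `(i', b)`
  have hmem {j : Fin (r i)} (hj : 2 * (a.val + 1) ≤ r i + 1 ∧ j.val < r i / 2 ∨
      r i + 1 < 2 * (a.val + 1) ∧ r i - r i / 2 ≤ j.val) :
      j ∈ {j ∈ core r i | some ⟨i, j⟩ ∈ resSet (bouquet m r) (some ⟨i, a⟩) (some ⟨i', b⟩)} := by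
    simp only [core, mem_filter, mem_univ, true_and, mem_resSet_bouquet, bouquetDist_same,
      bouquetDist_of_ne hi.symm]
    simp only [hubDist, cycleDist] at h ⊢
    omega
  by_cases hside : 2 * (a.val + 1) ≤ r i + 1
  · calc r i / 2 = #(Iio (⟨r i / 2, by omega⟩ : Fin (r i))) := by simp
      _ ≤ _ := card_le_card fun j hj => hmem (by simp only [mem_Iio, Fin.lt_def] at hj; omega)
  · calc r i / 2 = #(Ici (⟨r i - r i / 2, by omega⟩ : Fin (r i))) := by simp; omega
      _ ≤ _ := card_le_card fun j hj => hmem (by simp only [mem_Ici, Fin.le_def] at hj; omega)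

noncomputable def coreWeight (r : Fin m → ℕ) (k : ℝ) : Option (Σ i : Fin m, Fin (r i)) → ℝ
  | none => 0
  | some ⟨i, j⟩ => if j ∈ core r i then k / #(core r i) else 0

lemma sum_coreWeight (k : ℝ) (t : Finset (Option (Σ i : Fin m, Fin (r i)))) :
    ∑ z ∈ t, coreWeight r k z = ∑ i, coreCount t i * (k / #(core r i)) := by
  rw [← Fintype.sum_ite_mem, Fintype.sum_option, Fintype.sum_sigma]
  simp only [coreCount, coreWeight, ite_self, zero_add, ← nsmul_eq_mul, ← sum_const, sum_filter]
  refine sum_congr rfl fun i _ => ?_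
  rw [← Fintype.sum_ite_mem (core r i)]
  exact sum_congr rfl fun j _ => by split_ifs <;> rfl

lemma resSet_bouquet_cases (hm : 2 ≤ m) {x y : Option (Σ i : Fin m, Fin (r i))} (hxy : x ≠ y) :
    (∃ i, ∀ j ∈ core r i, some ⟨i, j⟩ ∈ resSet (bouquet m r) x y) ∨
      ∃ i i', i ≠ i' ∧ r i / 2 ≤ coreCount (resSet (bouquet m r) x y) i ∧
        r i' / 2 ≤ coreCount (resSet (bouquet m r) x y) i' := by
  have : Nontrivial (Fin m) := Fin.nontrivial_iff_two_le.2 hm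
  rcases x with _ | ⟨i, a⟩ <;> rcases y with _ | ⟨i', b⟩
  · exact absurd rfl hxy
  · obtain ⟨i₁, hi₁⟩ := exists_ne i'
    exact .inl ⟨i₁, fun j _ => mem_resSet_none_of_ne hi₁ b j⟩
  · obtain ⟨i₁, hi₁⟩ := exists_ne i
    rw [resSet_comm]
    exact .inl ⟨i₁, fun j _ => mem_resSet_none_of_ne hi₁ a j⟩
  obtain rfl | hi := eq_or_ne i i'
  · by_cases hd : hubDist r i a = hubDist r i b
    · have hab : a ≠ b := by rintro rfl; exact hxy rfl
      exact .inl ⟨i, fun j hj => mem_resSet_same_of_hubDist_eq hab hd hj⟩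
    · obtain ⟨i₁, hi₁⟩ := exists_ne i
      exact .inl ⟨i₁, fun j _ => mem_resSet_same_of_hubDist_ne hi₁ hd j⟩
  rcases lt_trichotomy (hubDist r i a) (hubDist r i' b) with h | h | h
  · exact .inl ⟨i, fun j _ => mem_resSet_of_hubDist_lt hi h j⟩
  · refine .inr ⟨i, i', hi, half_le_coreCount_resSet hi h, ?_⟩
    rw [resSet_comm]
    exact half_le_coreCount_resSet hi.symm h.symm
  · rw [resSet_comm]
    exact .inl ⟨i', fun j _ => mem_resSet_of_hubDist_lt hi.symm h j⟩

lemma le_mul_div_of_le {k : ℝ} {n : ℕ} (hk : k ≤ n) : k ≤ n * (k / n) := by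
  rcases eq_or_ne n 0 with rfl | hn
  · simpa using hk
  · rw [mul_div_cancel₀ _ (Nat.cast_ne_zero.2 hn)]

lemma half_le_mul_div_card_core {k : ℝ} (hk0 : 0 ≤ k) {i : Fin m} (hk : k ≤ #(core r i))
    {c : ℕ} (hc : r i / 2 ≤ c) : k / 2 ≤ c * (k / #(core r i)) := by
  rw [card_core] at hk ⊢
  rcases Nat.eq_zero_or_pos (r i / 2) with hq | hq
  · simp only [hq, mul_zero, CharP.cast_eq_zero] at hk ⊢
    simp [le_antisymm hk hk0]
  · calc k / 2 = (r i / 2 : ℕ) * (k / (2 * (r i / 2) : ℕ)) := by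
          push_cast
          field_simp
      _ ≤ c * (k / (2 * (r i / 2) : ℕ)) := by gcongr

lemma isKResolving_coreWeight (hm : 2 ≤ m) {k : ℝ} (hk0 : 0 ≤ k) (hk : ∀ i, k ≤ #(core r i)) :
    IsKResolving (bouquet m r) k (coreWeight r k) := by
  refine ⟨fun v => ?_, fun x y hxy => ?_⟩
  · rcases v with _ | ⟨i, j⟩
    · simp [coreWeight]
    · simp only [coreWeight]
      split_ifs
      · exact ⟨by positivity, div_le_one_of_le₀ (hk i) (Nat.cast_nonneg _)⟩
      · simp
  rw [sum_coreWeight]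
  have hterm : ∀ i ∈ univ, (0 : ℝ) ≤ coreCount (resSet (bouquet m r) x y) i * (k / #(core r i)) :=
    fun i _ => by positivity
  rcases resSet_bouquet_cases hm hxy with ⟨i, hi⟩ | ⟨i, i', hii, hi, hi'⟩
  · calc k ≤ #(core r i) * (k / #(core r i)) := le_mul_div_of_le (hk i)
      _ = coreCount (resSet (bouquet m r) x y) i * (k / #(core r i)) := by
          rw [coreCount, filter_true_of_mem hi]
      _ ≤ _ := single_le_sum hterm (mem_univ i)
  · calc k = k / 2 + k / 2 := (add_halves k).symm
      _ ≤ _ := add_le_add (half_le_mul_div_card_core hk0 (hk i) hi)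
          (half_le_mul_div_card_core hk0 (hk i') hi')
      _ ≤ _ := add_le_sum hterm (mem_univ i) (mem_univ i') hii

lemma sum_coreWeight_univ (hr : ∀ i, 2 ≤ r i) (k : ℝ) :
    ∑ z, coreWeight r k z = k * m := by
  have hcore (i : Fin m) : #(core r i) ≠ 0 := by rw [card_core]; have := hr i; omega
  calc ∑ z, coreWeight r k z = ∑ _i : Fin m, k := by
        rw [sum_coreWeight]
        refine sum_congr rfl fun i _ => ?_
        rw [coreCount, filter_true_of_mem fun _ _ => mem_univ _,
          mul_div_cancel₀ _ (Nat.cast_ne_zero.2 (hcore i))]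
    _ = k * m := by simp [mul_comm]

def cycleEmb (i : Fin m) : Fin (r i) ↪ Option (Σ i : Fin m, Fin (r i)) :=
  (Function.Embedding.sigmaMk (β := fun i => Fin (r i)) i).trans Function.Embedding.some

lemma exists_ne_resSet_subset_core (i : Fin m) (hr : 2 ≤ r i) :
    ∃ x y, x ≠ y ∧ resSet (bouquet m r) x y ⊆ (core r i).map (cycleEmb i) := by
  refine ⟨some ⟨i, ⟨0, by omega⟩⟩, some ⟨i, ⟨r i - 1, by omega⟩⟩, by simp; omega, ?_⟩
  intro z hz
  rw [mem_resSet_bouquet] at hz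
  rcases z with _ | ⟨i', j⟩
  · simp only [bouquetDist_some_none, hubDist] at hz
    omega
  obtain rfl | hi := eq_or_ne i' i
  · rw [bouquetDist_same, bouquetDist_same] at hz
    refine mem_map.2 ⟨j, ?_, rfl⟩
    simp only [cycleDist] at hz
    simp only [core, mem_filter, mem_univ, true_and]
    omega
  · rw [bouquetDist_of_ne hi.symm, bouquetDist_of_ne hi.symm] at hz
    simp only [hubDist] at hz
    omega

lemma card_core_le_of_le {i i' : Fin m} (h : r i ≤ r i') : #(core r i) ≤ #(core r i') := by
  rw [card_core, card_core]
  have := Nat.div_le_div_right (c := 2) h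
  omega

lemma kappa_bouquet (hm : 2 ≤ m) (hr : ∀ i, 2 ≤ r i) (i₀ : Fin m) (hmin : ∀ i, r i₀ ≤ r i) :
    kappa (bouquet m r) = #(core r i₀) := by
  obtain ⟨x, y, hxy, hsub⟩ := exists_ne_resSet_subset_core i₀ (hr i₀)
  refine le_antisymm ?_ ?_
  · exact (kappa_le_card_resSet hxy).trans ((card_le_card hsub).trans_eq (card_map _))
  · have hres := isKResolving_coreWeight (r := r) hm (Nat.cast_nonneg #(core r i₀))
      fun i => Nat.cast_le.2 (card_core_le_of_le (hmin i))
    exact_mod_cast hres.le_kappa hxy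

lemma le_sum_of_isKResolving (hr : ∀ i, 2 ≤ r i) {k : ℝ} {g : Option (Σ i : Fin m, Fin (r i)) → ℝ}
    (hg : IsKResolving (bouquet m r) k g) : k * m ≤ ∑ v, g v := by
  have hcycle (i : Fin m) : k ≤ ∑ j, g (some ⟨i, j⟩) := by
    obtain ⟨x, y, hxy, hsub⟩ := exists_ne_resSet_subset_core i (hr i)
    calc k ≤ ∑ z ∈ resSet (bouquet m r) x y, g z := hg.2 x y hxy
      _ ≤ ∑ z ∈ univ.map (cycleEmb i), g z :=
          sum_le_sum_of_subset_of_nonneg (hsub.trans (map_subset_map.2 (subset_univ _)))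
            fun z _ _ => (hg.1 z).1
      _ = ∑ j, g (some ⟨i, j⟩) := sum_map _ _ _
  calc k * m = ∑ _i : Fin m, k := by simp [mul_comm]
    _ ≤ ∑ i, ∑ j, g (some ⟨i, j⟩) := sum_le_sum fun i _ => hcycle i
    _ ≤ ∑ v, g v := by
        rw [Fintype.sum_option, Fintype.sum_sigma]
        linarith [(hg.1 none).1]

end Bouquet

end FracDim

open FracDim in
/-- For a bouquet `B_m` (`m ≥ 2`) of `m` cycles at a common cut-vertex, where cycle `i`
has `r i + 1` vertices (`r i ≥ 2`) and cycle `i₀` has minimum length: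
`κ(B_m) = |V(C^{i₀})| − 1` if `C^{i₀}` is odd, `κ(B_m) = |V(C^{i₀})| − 2` if `C^{i₀}` is
even, and `dim_f^k(B_m) = k·m` for every real `k` with `1 ≤ k ≤ κ(B_m)`. -/
theorem fracKDim_bouquet (m : ℕ) (hm : 2 ≤ m) (r : Fin m → ℕ) (hr : ∀ i, 2 ≤ r i)
    (i₀ : Fin m) (hmin : ∀ i, r i₀ ≤ r i) :
    (Odd (r i₀ + 1) → kappa (bouquet m r) = (r i₀ + 1) - 1) ∧
      (Even (r i₀ + 1) → kappa (bouquet m r) = (r i₀ + 1) - 2) ∧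
      ∀ k : ℝ, 1 ≤ k → k ≤ (kappa (bouquet m r) : ℝ) →
        fracKDim (bouquet m r) k = k * (m : ℝ) := by
  have hκ := kappa_bouquet hm hr i₀ hmin
  refine ⟨fun ⟨c, hc⟩ => ?_, fun ⟨c, hc⟩ => ?_, fun k hk1 hkκ => ?_⟩
  · rw [hκ, card_core]
    omega
  · rw [hκ, card_core]
    omega
  have hk (i : Fin m) : k ≤ #(core r i) :=
    hkκ.trans (hκ ▸ Nat.cast_le.2 (card_core_le_of_le (hmin i)))
  have hres := isKResolving_coreWeight hm (by linarith) hk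
  rw [fracKDim_eq_of_isKResolving hres fun g hg =>
    (sum_coreWeight_univ hr k).trans_le (le_sum_of_isKResolving hr hg), sum_coreWeight_univ hr k]
end
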